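/- arXiv:math/0205291 — 2 statements merged into one kernel-verified Lean document; each statement's English description precedes it below -/
import Mathlib

section
/- The norm of the free normed space L(X,∗,d) admits the Graev/Kantorovich description: for every x ∈ L(X), ‖x‖ equals the infimum of Σᵢ |λᵢ| d(xᵢ,yᵢ) over all n ∈ ℕ, real scalars λᵢ, and points xᵢ, yᵢ ∈ X such that x = Σᵢ λᵢ xᵢ and 0 = Σᵢ λᵢ yᵢ in L(X). -/
open scoped BigOperators

/-- The free real vector space on a pointed metric space `(X, base)`:
the vector space with Hamel basis `X \ {base}` (and `base` serving as zero). -/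
def FreeL (X : Type*) [MetricSpace X] (base : X) : Type _ :=
  {x : X // x ≠ base} →₀ ℝ

namespace FreeL

open Classical

variable {X : Type*} [MetricSpace X]

noncomputable instance (base : X) : AddCommGroup (FreeL X base) :=
  Finsupp.instAddCommGroup

noncomputable instance (base : X) : Module ℝ (FreeL X base) :=
  Finsupp.module _ _

/-- The canonical embedding of `X` into `FreeL X base`, sending `base` to `0`. -/
noncomputable def δ (base : X) (x : X) : FreeL X base :=
  if h : x = base then 0 else Finsupp.single ⟨x, h⟩ 1

/-- A seminorm on the free vector space whose induced distance on `X` is majorized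
by the metric `d`. -/
def IsGoodSeminorm (base : X) (p : Seminorm ℝ (FreeL X base)) : Prop :=
  ∀ x y : X, p (δ base x - δ base y) ≤ dist x y

/-- The largest seminorm on `FreeL X base` whose induced distance on `X` is
majorized by the metric of `X`. -/
noncomputable def freeNorm (base : X) (z : FreeL X base) : ℝ :=
  ⨆ p : {p : Seminorm ℝ (FreeL X base) // IsGoodSeminorm base p}, p.1 z

end FreeL

/-!
Write `N z` for the infimum on the right-hand side. Concatenating representations shows that `N`
is subadditive, rescaling them that it is absolutely homogeneous, and the representation
`δx - δy = 1 • δx + (-1) • δy`, paired with `0 = 1 • δx + (-1) • δx`, gives `N (δx - δy) ≤ d(x, y)`;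
so `N` is one of the seminorms in the supremum defining `freeNorm`. Conversely, a representation
makes `z = ∑ λᵢ (δxᵢ - δyᵢ)`, so every seminorm `p` with `p (δx - δy) ≤ d(x, y)` satisfies
`p z ≤ ∑ |λᵢ| d(xᵢ, yᵢ)`, hence `p ≤ N`. Thus `N` is the largest such seminorm.
-/

namespace FreeL

open scoped Pointwise

variable {X : Type*} [MetricSpace X] {base : X}

theorem δ_base : δ base base = 0 := dif_pos rfl

theorem δ_of_ne {x : X} (hx : x ≠ base) : δ base x = Finsupp.single ⟨x, hx⟩ 1 := dif_neg hx

theorem span_range_δ : Submodule.span ℝ (Set.range (δ base)) = ⊤ := by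
  refine top_unique (le_of_eq_of_le
    (Finsupp.basisSingleOne (ι := {x : X // x ≠ base}) (R := ℝ)).span_eq.symm ?_)
  rw [Finsupp.coe_basisSingleOne]
  refine Submodule.span_mono ?_
  rintro _ ⟨a, rfl⟩
  exact ⟨a, δ_of_ne a.2⟩

theorem exists_eq_sum_smul_δ (z : FreeL X base) :
    ∃ (n : ℕ) (lam : Fin n → ℝ) (xs : Fin n → X), z = ∑ i, lam i • δ base (xs i) := by
  have hz : z ∈ Submodule.span ℝ (Set.range (δ base)) := by
    rw [span_range_δ]
    exact Submodule.mem_top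
  obtain ⟨n, lam, g, hz⟩ := Submodule.mem_span_set'.1 hz
  choose xs hxs using fun i => (g i).2
  exact ⟨n, lam, xs, by simp only [hxs, hz]⟩

def graevSet (base : X) (z : FreeL X base) : Set ℝ :=
  {s : ℝ | ∃ (n : ℕ) (lam : Fin n → ℝ) (xs ys : Fin n → X),
    z = ∑ i, lam i • δ base (xs i) ∧
    (0 : FreeL X base) = ∑ i, lam i • δ base (ys i) ∧
    s = ∑ i, |lam i| * dist (xs i) (ys i)}

theorem graevSet_nonempty (z : FreeL X base) : (graevSet base z).Nonempty := by
  obtain ⟨n, lam, xs, hz⟩ := exists_eq_sum_smul_δ z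
  exact ⟨_, n, lam, xs, fun _ => base, hz, by simp only [δ_base, smul_zero, Finset.sum_const_zero],
    rfl⟩

theorem nonneg_of_mem_graevSet {z : FreeL X base} {s : ℝ} (hs : s ∈ graevSet base z) :
    0 ≤ s := by
  obtain ⟨n, lam, xs, ys, -, -, rfl⟩ := hs
  exact Finset.sum_nonneg fun i _ => mul_nonneg (abs_nonneg _) dist_nonneg

theorem bddBelow_graevSet (z : FreeL X base) : BddBelow (graevSet base z) :=
  ⟨0, fun _ => nonneg_of_mem_graevSet⟩

theorem add_graevSet_subset (x y : FreeL X base) :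
    graevSet base x + graevSet base y ⊆ graevSet base (x + y) := by
  rintro _ ⟨_, ⟨n, lam, xs, ys, hx, hx₀, rfl⟩, _, ⟨m, mu, us, vs, hy, hy₀, rfl⟩, rfl⟩
  refine ⟨n + m, Fin.append lam mu, Fin.append xs us, Fin.append ys vs, ?_, ?_, ?_⟩ <;>
    simp only [Fin.sum_univ_add, Fin.append_left, Fin.append_right, ← hx, ← hy, ← hx₀, ← hy₀,
      add_zero]

theorem smul_graevSet_subset (c : ℝ) (z : FreeL X base) :
    |c| • graevSet base z ⊆ graevSet base (c • z) := by
  rintro _ ⟨_, ⟨n, lam, xs, ys, hz, hz₀, rfl⟩, rfl⟩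
  refine ⟨n, fun i => c * lam i, xs, ys, ?_, ?_, ?_⟩
  · simp only [hz, Finset.smul_sum, smul_smul]
  · simp only [mul_smul, ← Finset.smul_sum, ← hz₀, smul_zero]
  · simp only [smul_eq_mul, Finset.mul_sum, abs_mul, mul_assoc]

noncomputable def graev (base : X) (z : FreeL X base) : ℝ :=
  sInf (graevSet base z)

theorem graev_nonneg (z : FreeL X base) : 0 ≤ graev base z :=
  le_csInf (graevSet_nonempty z) fun _ => nonneg_of_mem_graevSet

theorem graev_add_le (x y : FreeL X base) : graev base (x + y) ≤ graev base x + graev base y :=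
  calc graev base (x + y) ≤ sInf (graevSet base x + graevSet base y) :=
        csInf_le_csInf (bddBelow_graevSet _)
          ((graevSet_nonempty x).add (graevSet_nonempty y)) (add_graevSet_subset x y)
    _ = graev base x + graev base y :=
        csInf_add (graevSet_nonempty x) (bddBelow_graevSet x) (graevSet_nonempty y)
          (bddBelow_graevSet y)

theorem graev_smul_le (c : ℝ) (z : FreeL X base) : graev base (c • z) ≤ ‖c‖ * graev base z :=
  calc graev base (c • z) ≤ sInf (|c| • graevSet base z) :=
        csInf_le_csInf (bddBelow_graevSet _) ((graevSet_nonempty z).smul_set)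
          (smul_graevSet_subset c z)
    _ = ‖c‖ * graev base z := Real.sInf_smul_of_nonneg (abs_nonneg c) _

theorem graev_zero : graev base (0 : FreeL X base) = 0 :=
  le_antisymm (by simpa using graev_smul_le (0 : ℝ) (0 : FreeL X base)) (graev_nonneg 0)

noncomputable def graevSeminorm (base : X) : Seminorm ℝ (FreeL X base) :=
  Seminorm.ofSMulLE (graev base) graev_zero graev_add_le graev_smul_le

theorem isGoodSeminorm_graevSeminorm : IsGoodSeminorm base (graevSeminorm base) := by
  intro x y
  refine csInf_le_of_le (bddBelow_graevSet _) ⟨2, ![1, -1], ![x, y], ![x, x], ?_, ?_, rfl⟩ ?_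
  · simp [Fin.sum_univ_two, sub_eq_add_neg]
  · simp [Fin.sum_univ_two]
  · simp [Fin.sum_univ_two, dist_comm]

theorem IsGoodSeminorm.le_graev {p : Seminorm ℝ (FreeL X base)} (hp : IsGoodSeminorm base p)
    (z : FreeL X base) : p z ≤ graev base z := by
  refine le_csInf (graevSet_nonempty z) ?_
  rintro _ ⟨n, lam, xs, ys, hz, hz₀, rfl⟩
  have hz' : z = ∑ i, lam i • (δ base (xs i) - δ base (ys i)) := by
    simp only [smul_sub, Finset.sum_sub_distrib, ← hz, ← hz₀, sub_zero]
  calc p z ≤ ∑ i, p (lam i • (δ base (xs i) - δ base (ys i))) :=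
        hz' ▸ Finset.le_sum_of_subadditive p (map_zero p).le (map_add_le_add p) _ _
    _ ≤ ∑ i, |lam i| * dist (xs i) (ys i) := by
        refine Finset.sum_le_sum fun i _ => ?_
        rw [map_smul_eq_mul, Real.norm_eq_abs]
        exact mul_le_mul_of_nonneg_left (hp (xs i) (ys i)) (abs_nonneg _)

end FreeL

/-- Graev/Kantorovich description of the norm of the free normed space:
`‖z‖` is the infimum of `∑ |λᵢ| d(xᵢ, yᵢ)` over all representations
`z = ∑ λᵢ xᵢ`, `0 = ∑ λᵢ yᵢ` with `λᵢ ∈ ℝ` and `xᵢ, yᵢ ∈ X`. -/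
theorem freeNorm_eq_graev_formula
    {X : Type*} [MetricSpace X] (base : X) (z : FreeL X base) :
    FreeL.freeNorm base z =
      sInf {s : ℝ | ∃ (n : ℕ) (lam : Fin n → ℝ) (xs ys : Fin n → X),
        z = ∑ i, lam i • FreeL.δ base (xs i) ∧
        (0 : FreeL X base) = ∑ i, lam i • FreeL.δ base (ys i) ∧
        s = ∑ i, |lam i| * dist (xs i) (ys i)} := by
  show FreeL.freeNorm base z = FreeL.graev base z
  let graevGood : {p : Seminorm ℝ (FreeL X base) // FreeL.IsGoodSeminorm base p} :=
    ⟨FreeL.graevSeminorm base, FreeL.isGoodSeminorm_graevSeminorm⟩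
  have : Nonempty {p : Seminorm ℝ (FreeL X base) // FreeL.IsGoodSeminorm base p} := ⟨graevGood⟩
  have hbdd : BddAbove (Set.range fun p :
      {p : Seminorm ℝ (FreeL X base) // FreeL.IsGoodSeminorm base p} => p.1 z) :=
    ⟨_, Set.forall_mem_range.2 fun p => p.2.le_graev z⟩
  exact le_antisymm (ciSup_le fun p => p.2.le_graev z) (le_ciSup_of_le hbdd graevGood le_rfl)
end

section
/- Universal property of the Graev metric: if (G,ς) is an abelian group with a bi-invariant metric and f: X → G is 1-Lipschitz with f(∗) = 0, then the unique group homomorphism f̄: A(X,∗) → G extending f is 1-Lipschitz with respect to the Graev metric d̄ on A(X,∗). -/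
/-!
Every good seminorm is bounded by the cost `∑ |cᵢ| d(xᵢ, yᵢ)` of any representation
`z = ∑ cᵢ • (δ xᵢ - δ yᵢ)`, and the infimum of these costs is itself a good seminorm, so
`freeNorm` is this infimum. A homomorphism `F` into a group with an invariant metric yields the
group seminorm `a ↦ ς(F a, 0)` on `A(X)`, which is bounded by the cost of every representation with
*integer* coefficients. It therefore suffices that every real representation of an element of the
lattice `A(X)` can be replaced by an integer one of no larger cost.

This is a rounding argument on the multigraph with an edge from `yᵢ` to `xᵢ` for each `i`. Since
the coordinates of `z` are integers, every vertex other than `∗` meets at least two of the edges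
with non-integral coefficients; hence these edges are at least as many as their endpoints, so
they do not form a forest and their vectors are linearly dependent. Moving the coefficients
along a dependency, in the direction in which the cost does not increase, until a first
non-integral coefficient becomes an integer, keeps `z`, does not change the sign of any
coefficient (so the cost is affine along the move and does not increase), and lowers the number
of non-integral coefficients.
-/

open scoped BigOperators

open Finset

section EdgeChains

variable {α ι : Type*}

noncomputable def chainBoundary [Fintype ι] (x y : ι → α) : (ι → ℝ) →ₗ[ℝ] α →₀ ℝ :=
  Fintype.linearCombination ℝ fun i => Finsupp.single (x i) 1 - Finsupp.single (y i) 1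

theorem chainBoundary_apply [Fintype ι] (x y : ι → α) (c : ι → ℝ) :
    chainBoundary x y c = ∑ i, c i • (Finsupp.single (x i) 1 - Finsupp.single (y i) 1) :=
  Fintype.linearCombination_apply ..

open Classical in
noncomputable def nonintegralIndices [Fintype ι] (c : ι → ℝ) : Finset ι :=
  {i | c i ∉ (Int.castRingHom ℝ).range}

theorem mem_nonintegralIndices [Fintype ι] {c : ι → ℝ} {i : ι} :
    i ∈ nonintegralIndices c ↔ c i ∉ (Int.castRingHom ℝ).range := by
  simp [nonintegralIndices]

theorem sum_smul_edge_apply [DecidableEq α] (S : Finset ι) (c : ι → ℝ) (x y : ι → α) (v : α) :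
    (∑ i ∈ S, c i • (Finsupp.single (x i) 1 - Finsupp.single (y i) 1 : α →₀ ℝ)) v =
      ∑ i ∈ S with x i = v, c i - ∑ i ∈ S with y i = v, c i := by
  simp [Finsupp.finsetSum_apply, Finsupp.single_apply, Finset.sum_filter, mul_sub,
    Finset.sum_sub_distrib]

theorem card_incident_ne_one [DecidableEq α] {S : Finset ι} {c : ι → ℝ} {x y : ι → α} {v : α}
    (hS : ∀ i ∈ S, c i ∉ (Int.castRingHom ℝ).range)
    (hv : (∑ i ∈ S, c i • (Finsupp.single (x i) 1 - Finsupp.single (y i) 1 : α →₀ ℝ)) v ∈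
      (Int.castRingHom ℝ).range) :
    #{i ∈ S | x i = v} + #{i ∈ S | y i = v} ≠ 1 := by
  intro h
  rw [sum_smul_edge_apply] at hv
  rcases Nat.add_eq_one_iff.mp h with ⟨hx, hy⟩ | ⟨hx, hy⟩
  · obtain ⟨i, hi⟩ := card_eq_one.mp hy
    rw [card_eq_zero.mp hx, hi, sum_empty, sum_singleton, zero_sub] at hv
    exact hS i (filter_subset _ S (hi ▸ mem_singleton_self i)) (by simpa using hv)
  · obtain ⟨i, hi⟩ := card_eq_one.mp hx
    rw [card_eq_zero.mp hy, hi, sum_empty, sum_singleton, sub_zero] at hv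
    exact hS i (filter_subset _ S (hi ▸ mem_singleton_self i)) hv

theorem card_endpoints_le [DecidableEq α] {S : Finset ι} {c : ι → ℝ} {x y : ι → α} (b : α)
    (hS : ∀ i ∈ S, c i ∉ (Int.castRingHom ℝ).range)
    (hint : ∀ v ≠ b, (∑ i ∈ S, c i • (Finsupp.single (x i) 1 - Finsupp.single (y i) 1 :
      α →₀ ℝ)) v ∈ (Int.castRingHom ℝ).range) :
    #(S.image x ∪ S.image y) ≤ #S := by
  set V := S.image x ∪ S.image y
  set deg : α → ℕ := fun v => #{i ∈ S | x i = v} + #{i ∈ S | y i = v}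
  have handshake : ∑ v ∈ V, deg v = 2 * #S := by
    rw [sum_add_distrib, ← card_eq_sum_card_fiberwise, ← card_eq_sum_card_fiberwise, two_mul]
    · exact fun i hi => mem_union_right _ (mem_image_of_mem y hi)
    · exact fun i hi => mem_union_left _ (mem_image_of_mem x hi)
  have deg_pos : ∀ v ∈ V, 1 ≤ deg v := by
    intro v hv
    rcases mem_union.mp hv with hv | hv <;> obtain ⟨i, hi, rfl⟩ := mem_image.mp hv
    · have : 0 < #{j ∈ S | x j = x i} := card_pos.mpr ⟨i, mem_filter.mpr ⟨hi, rfl⟩⟩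
      dsimp only [deg]; omega
    · have : 0 < #{j ∈ S | y j = y i} := card_pos.mpr ⟨i, mem_filter.mpr ⟨hi, rfl⟩⟩
      dsimp only [deg]; omega
  have deg_ge : ∀ v ∈ V, 2 ≤ deg v + if b = v then 1 else 0 := by
    intro v hv
    have := deg_pos v hv
    by_cases hvb : b = v
    · simp only [hvb, if_true]; omega
    · have := card_incident_ne_one hS (hint v (Ne.symm hvb))
      simp only [deg, hvb, if_false] at *; omega
  have := sum_le_sum deg_ge
  rw [sum_add_distrib, handshake, sum_ite_eq, sum_const, smul_eq_mul] at this
  split_ifs at this <;> omega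

theorem card_lt_card_endpoints_of_linearIndepOn [DecidableEq α] {S : Finset ι} (x y : ι → α)
    (hS : S.Nonempty)
    (hli : LinearIndepOn ℝ (fun i => Finsupp.single (x i) 1 - Finsupp.single (y i) 1 :
      ι → α →₀ ℝ) S) :
    #S < #(S.image x ∪ S.image y) := by
  set V := S.image x ∪ S.image y
  obtain ⟨i₀, hi₀⟩ := hS
  set v₀ := x i₀
  have hv₀ : v₀ ∈ V := mem_union_left _ (mem_image_of_mem x hi₀)
  set W : Finset (α →₀ ℝ) :=
    (V.erase v₀).image fun v => Finsupp.single v (1 : ℝ) - Finsupp.single v₀ 1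
  have hW : ∀ v ∈ V,
      Finsupp.single v (1 : ℝ) - Finsupp.single v₀ 1 ∈ Submodule.span ℝ (W : Set _) := by
    intro v hv
    by_cases h : v = v₀
    · simp [h]
    · exact Submodule.subset_span (mem_image_of_mem _ (mem_erase.mpr ⟨h, hv⟩))
  have hspan : Set.range (fun i : (S : Set ι) =>
      (Finsupp.single (x i) 1 - Finsupp.single (y i) 1 : α →₀ ℝ)) ⊆
      Submodule.span ℝ (W : Set (α →₀ ℝ)) := by
    rintro _ ⟨⟨i, hi⟩, rfl⟩
    have := sub_mem (hW (x i) (mem_union_left _ (mem_image_of_mem x hi)))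
      (hW (y i) (mem_union_right _ (mem_image_of_mem y hi)))
    simpa using this
  have := linearIndependent_le_span' _ hli _ hspan
  simp only [Cardinal.mk_coe_finset, Finset.coe_sort_coe,
    Fintype.card_coe, Nat.cast_le] at this
  have hWcard : #W ≤ #V - 1 := card_image_le.trans (card_erase_of_mem hv₀).le
  have : 0 < #V := card_pos.mpr ⟨v₀, hv₀⟩
  omega

theorem exists_ne_zero_chainBoundary_eq_zero [Fintype ι] [DecidableEq α] {x y : ι → α} {c : ι → ℝ}
    (b : α) (hc : ∀ v ≠ b, chainBoundary x y c v ∈ (Int.castRingHom ℝ).range)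
    (hne : (nonintegralIndices c).Nonempty) :
    ∃ k : ι → ℝ, chainBoundary x y k = 0 ∧ k ≠ 0 ∧
      ∀ i, k i ≠ 0 → i ∈ nonintegralIndices c := by
  classical
  set S := nonintegralIndices c
  set e : ι → α →₀ ℝ := fun i => Finsupp.single (x i) 1 - Finsupp.single (y i) 1
  have hS : ∀ i ∈ S, c i ∉ (Int.castRingHom ℝ).range := fun i hi => mem_nonintegralIndices.mp hi
  have hSc : ∀ i ∉ S, c i ∈ (Int.castRingHom ℝ).range := fun i hi =>
    not_not.mp (mt mem_nonintegralIndices.mpr hi)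
  have hint : ∀ v ≠ b, (∑ i ∈ S, c i • e i) v ∈ (Int.castRingHom ℝ).range := by
    intro v hv
    have hsplit : ∑ i ∈ S, c i • e i = chainBoundary x y c - ∑ i ∈ Sᶜ, c i • e i := by
      rw [chainBoundary_apply, ← sum_add_sum_compl S, add_sub_cancel_right]
    rw [hsplit, Finsupp.sub_apply, sum_smul_edge_apply]
    refine sub_mem (hc v hv) (sub_mem (sum_mem fun i hi => ?_) (sum_mem fun i hi => ?_)) <;>
      exact hSc i (mem_compl.mp (filter_subset _ _ hi))
  have hdep : ¬ LinearIndepOn ℝ e S := fun hli =>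
    (card_lt_card_endpoints_of_linearIndepOn x y hne hli).not_ge (card_endpoints_le b hS hint)
  obtain ⟨l, hlS, hl0, hl⟩ := linearDepOn_iff'.mp hdep
  refine ⟨l, ?_, fun h => hl (DFunLike.coe_injective h), fun i hi => hlS ?_⟩
  · rwa [Finsupp.linearCombination_apply, Finsupp.sum_fintype _ _ (by simp),
      ← chainBoundary_apply] at hl0
  · exact Finsupp.mem_support_iff.mpr hi

theorem abs_eq_of_floor_le_of_le_ceil {r s : ℝ} (h₁ : ⌊r⌋ ≤ s) (h₂ : s ≤ ⌈r⌉) :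
    |s| = (if 0 ≤ r then 1 else -1) * s := by
  split_ifs with hr
  · have : (0 : ℝ) ≤ ⌊r⌋ := mod_cast Int.floor_nonneg.mpr hr
    rw [one_mul, abs_of_nonneg (this.trans h₁)]
  · have : (⌈r⌉ : ℝ) ≤ 0 := mod_cast Int.ceil_le.mpr (by push_cast; linarith)
    rw [neg_one_mul, abs_of_nonpos (h₂.trans this)]

theorem exists_step_to_integer [Fintype ι] (c k : ι → ℝ) (hk : k ≠ 0) :
    ∃ t : ℝ, 0 ≤ t ∧ (∃ i₀, k i₀ ≠ 0 ∧ c i₀ + t * k i₀ ∈ (Int.castRingHom ℝ).range) ∧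
      ∀ i, (⌊c i⌋ : ℝ) ≤ c i + t * k i ∧ c i + t * k i ≤ ⌈c i⌉ := by
  -- `τ i` is the time at which `c + τ • k` reaches an integer in coordinate `i`
  set target : ι → ℝ := fun i => if 0 < k i then (⌈c i⌉ : ℝ) else ⌊c i⌋
  set τ : ι → ℝ := fun i => (target i - c i) / k i
  have hτk : ∀ i, k i ≠ 0 → τ i * k i = target i - c i := fun i hi => div_mul_cancel₀ _ hi
  have hτ : ∀ i, k i ≠ 0 → 0 ≤ τ i := by
    intro i hi
    rcases hi.lt_or_gt with hneg | hpos
    · exact div_nonneg_of_nonpos (by simp [target, hneg.not_gt, Int.floor_le]) hneg.le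
    · exact div_nonneg (by simp [target, hpos, Int.le_ceil]) hpos.le
  obtain ⟨i₀, hi₀, hmin⟩ := exists_min_image {i | k i ≠ 0} τ
    (by simpa [Finset.Nonempty, Function.ne_iff] using hk)
  have hk₀ : k i₀ ≠ 0 := (mem_filter.mp hi₀).2
  refine ⟨τ i₀, hτ i₀ hk₀, ⟨i₀, hk₀, ?_⟩, fun i => ?_⟩
  · rw [hτk i₀ hk₀, add_sub_cancel]
    simp only [target]
    split_ifs <;> exact ⟨_, rfl⟩
  by_cases hi : k i = 0
  · simp [hi, Int.floor_le, Int.le_ceil]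
  have hle : τ i₀ ≤ τ i := hmin i (mem_filter.mpr ⟨mem_univ i, hi⟩)
  have h₀ := hτ i₀ hk₀
  have h₁ := hτk i hi
  have := Int.floor_le (c i)
  have := Int.le_ceil (c i)
  rcases Ne.lt_or_gt hi with hneg | hpos
  · simp only [target, hneg.not_gt, if_false] at h₁
    constructor <;> nlinarith
  · simp only [target, hpos, if_true] at h₁
    constructor <;> nlinarith

theorem exists_cost_le_of_nonintegralIndices_ssubset [Fintype ι] (w c k : ι → ℝ) (hk : k ≠ 0)
    (hkc : ∀ i, k i ≠ 0 → i ∈ nonintegralIndices c) :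
    ∃ t : ℝ, ∑ i, |c i + t * k i| * w i ≤ ∑ i, |c i| * w i ∧
      nonintegralIndices (c + t • k) ⊂ nonintegralIndices c := by
  set σ : ι → ℝ := fun i => if 0 ≤ c i then 1 else -1
  wlog hdir : ∑ i, σ i * k i * w i ≤ 0 generalizing k with H
  · obtain ⟨t, ht⟩ := H (-k) (neg_ne_zero.mpr hk) (fun i hi => hkc i (by simpa using hi))
      (by simp only [Pi.neg_apply, mul_neg, neg_mul, sum_neg_distrib]; linarith)
    exact ⟨-t, by simpa using ht⟩
  obtain ⟨t, ht, ⟨i₀, hk₀, hi₀⟩, hcell⟩ := exists_step_to_integer c k hk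
  refine ⟨t, ?_, (ssubset_iff_of_subset fun i hi => ?_).mpr ⟨i₀, hkc i₀ hk₀, ?_⟩⟩
  · -- no coordinate changes sign, so the cost is affine in `t` with slope `∑ σ k w ≤ 0`
    have hσ : ∀ i, |c i| = σ i * c i := fun i =>
      abs_eq_of_floor_le_of_le_ceil (Int.floor_le _) (Int.le_ceil _)
    have hσ' : ∀ i, |c i + t * k i| = σ i * (c i + t * k i) := fun i =>
      abs_eq_of_floor_le_of_le_ceil (hcell i).1 (hcell i).2
    calc ∑ i, |c i + t * k i| * w i
        = ∑ i, |c i| * w i + t * ∑ i, σ i * k i * w i := by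
          simp only [hσ, hσ', mul_sum, ← sum_add_distrib]; congr 1; ext; ring
      _ ≤ ∑ i, |c i| * w i := by nlinarith
  · by_cases hki : k i = 0
    · simpa [nonintegralIndices, hki] using hi
    · exact hkc i hki
  · simpa [mem_nonintegralIndices] using hi₀

theorem exists_int_chainBoundary_eq [Fintype ι] [DecidableEq α] {x y : ι → α} (w : ι → ℝ)
    (b : α) (c : ι → ℝ) (hc : ∀ v ≠ b, chainBoundary x y c v ∈ (Int.castRingHom ℝ).range) :
    ∃ m : ι → ℤ, chainBoundary x y (fun i => m i) = chainBoundary x y c ∧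
      ∑ i, |(m i : ℝ)| * w i ≤ ∑ i, |c i| * w i := by
  induction hn : #(nonintegralIndices c) using Nat.strong_induction_on generalizing c with
  | _ n ih =>
  rcases (nonintegralIndices c).eq_empty_or_nonempty with hempty | hne
  · have hint : ∀ i, c i ∈ (Int.castRingHom ℝ).range := fun i =>
      not_not.mp fun h => by simpa [hempty] using mem_nonintegralIndices.mpr h
    choose m hm using hint
    obtain rfl : (fun i => (m i : ℝ)) = c := funext hm
    exact ⟨m, rfl, le_rfl⟩
  · obtain ⟨k, hk₀, hk, hkc⟩ := exists_ne_zero_chainBoundary_eq_zero b hc hne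
    obtain ⟨t, hcost, hlt⟩ := exists_cost_le_of_nonintegralIndices_ssubset w c k hk hkc
    have hbd : chainBoundary x y (c + t • k) = chainBoundary x y c := by
      rw [map_add, map_smul, hk₀, smul_zero, add_zero]
    obtain ⟨m, hm, hmc⟩ := ih _ (hn ▸ card_lt_card hlt) (c + t • k) (hbd ▸ hc) rfl
    exact ⟨m, hm.trans hbd, hmc.trans (by simpa using hcost)⟩

end EdgeChains

theorem AddGroupSeminorm.map_sum_zsmul_le {A ι : Type*} [AddCommGroup A] (q : AddGroupSeminorm A)
    (s : Finset ι) (m : ι → ℤ) (g : ι → A) :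
    q (∑ i ∈ s, m i • g i) ≤ ∑ i ∈ s, |(m i : ℝ)| * q (g i) := by
  let := q.toSeminormedAddCommGroup
  exact (norm_sum_le _ _).trans (sum_le_sum fun i _ => by
    simpa [Int.norm_eq_abs] using norm_zsmul_le (m i) (g i))

section InvariantDist

variable {G : Type*} [AddCommGroup G] [PseudoMetricSpace G]

def AddGroupSeminorm.ofInvariantDist (h : ∀ a b c : G, dist (a + c) (b + c) = dist a b) :
    AddGroupSeminorm G where
  toFun g := dist g 0
  map_zero' := dist_self 0
  add_le' a b := by
    calc dist (a + b) 0 ≤ dist (a + b) (0 + b) + dist b 0 := by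
          rw [zero_add]; exact dist_triangle _ _ _
      _ = dist a 0 + dist b 0 := by rw [h]
  neg' a := by rw [← h (-a) 0 a, neg_add_cancel, zero_add, dist_comm]

theorem dist_sub_zero_of_invariant (h : ∀ a b c : G, dist (a + c) (b + c) = dist a b) (a b : G) :
    dist (a - b) 0 = dist a b := by
  rw [← h (a - b) 0 b, sub_add_cancel, zero_add]

end InvariantDist

namespace FreeL

open scoped Pointwise

variable {X : Type*} [MetricSpace X] {base : X}

variable (base) in
noncomputable def restrict : (X →₀ ℝ) →ₗ[ℝ] FreeL X base :=
  Finsupp.lsubtypeDomain {x | x ≠ base}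

theorem restrict_single (x : X) : restrict base (Finsupp.single x 1) = δ base x := by
  classical
  by_cases h : x = base
  · subst h
    rw [show δ x x = 0 from dif_pos rfl]
    exact Finsupp.ext fun s => Finsupp.single_eq_of_ne s.2
  · rw [show δ base x = Finsupp.single ⟨x, h⟩ 1 from dif_neg h]
    refine Finsupp.ext fun s => ?_
    change Finsupp.single x (1 : ℝ) (s : X) = Finsupp.single (⟨x, h⟩ : {x // x ≠ base}) 1 s
    simp [Finsupp.single_apply, Subtype.ext_iff]

theorem restrict_chainBoundary {ι : Type*} [Fintype ι] (x y : ι → X) (c : ι → ℝ) :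
    restrict base (chainBoundary x y c) = ∑ i, c i • (δ base (x i) - δ base (y i)) := by
  simp [chainBoundary_apply, restrict_single]

theorem apply_mem_range_of_restrict_mem_closure {w : X →₀ ℝ}
    (hw : restrict base w ∈ AddSubgroup.closure (Set.range (δ base))) {v : X} (hv : v ≠ base) :
    w v ∈ (Int.castRingHom ℝ).range := by
  classical
  have hle : AddSubgroup.closure (Set.range (δ base)) ≤
      (Int.castRingHom ℝ).range.toAddSubgroup.comap
        (Finsupp.applyAddHom ⟨v, hv⟩ : FreeL X base →+ ℝ) := by
    refine (AddSubgroup.closure_le _).mpr ?_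
    rintro _ ⟨x, rfl⟩
    rw [← restrict_single]
    change Finsupp.single x (1 : ℝ) v ∈ (Int.castRingHom ℝ).range
    rw [Finsupp.single_apply]
    split_ifs
    exacts [⟨1, by simp⟩, ⟨0, by simp⟩]
  exact hle hw

theorem exists_int_repr_cost_le {ι : Type*} [Fintype ι] {z : FreeL X base}
    (hz : z ∈ AddSubgroup.closure (Set.range (δ base))) (c : ι → ℝ) (x y : ι → X)
    (hrep : ∑ i, c i • (δ base (x i) - δ base (y i)) = z) :
    ∃ m : ι → ℤ, ∑ i, m i • (δ base (x i) - δ base (y i)) = z ∧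
      ∑ i, |(m i : ℝ)| * dist (x i) (y i) ≤ ∑ i, |c i| * dist (x i) (y i) := by
  classical
  rw [← hrep, ← restrict_chainBoundary] at hz
  obtain ⟨m, hm, hcost⟩ := exists_int_chainBoundary_eq (fun i => dist (x i) (y i)) base c
    fun v hv => apply_mem_range_of_restrict_mem_closure hz hv
  refine ⟨m, ?_, hcost⟩
  rw [← hrep, ← restrict_chainBoundary, ← hm, restrict_chainBoundary]
  simp [Int.cast_smul_eq_zsmul]

variable (base) in
def reprCosts (z : FreeL X base) : Set ℝ :=
  {r | ∃ (n : ℕ) (c : Fin n → ℝ) (x y : Fin n → X),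
    ∑ i, c i • (δ base (x i) - δ base (y i)) = z ∧ ∑ i, |c i| * dist (x i) (y i) = r}

theorem nonneg_of_mem_reprCosts {z : FreeL X base} {r : ℝ} (hr : r ∈ reprCosts base z) : 0 ≤ r := by
  obtain ⟨n, c, x, y, -, rfl⟩ := hr
  exact sum_nonneg fun i _ => mul_nonneg (abs_nonneg _) dist_nonneg

theorem bddBelow_reprCosts (z : FreeL X base) : BddBelow (reprCosts base z) :=
  ⟨0, fun _ => nonneg_of_mem_reprCosts⟩

theorem reprCosts_add_subset (z w : FreeL X base) :
    reprCosts base z + reprCosts base w ⊆ reprCosts base (z + w) := by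
  rintro _ ⟨_, ⟨n, c, x, y, rfl, rfl⟩, _, ⟨n', c', x', y', rfl, rfl⟩, rfl⟩
  refine ⟨n + n', Fin.append c c', Fin.append x x', Fin.append y y', ?_, ?_⟩ <;>
    simp [Fin.sum_univ_add]

theorem abs_smul_reprCosts_subset (a : ℝ) (z : FreeL X base) :
    |a| • reprCosts base z ⊆ reprCosts base (a • z) := by
  rintro _ ⟨_, ⟨n, c, x, y, rfl, rfl⟩, rfl⟩
  refine ⟨n, a • c, x, y, ?_, ?_⟩
  · simp [smul_sum, smul_smul]
  · simp [mul_sum, abs_mul, mul_assoc]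

theorem zero_mem_reprCosts_zero : (0 : ℝ) ∈ reprCosts base 0 :=
  ⟨0, Fin.elim0, Fin.elim0, Fin.elim0, rfl, by simp⟩

theorem dist_mem_reprCosts (x y : X) : dist x y ∈ reprCosts base (δ base x - δ base y) :=
  ⟨1, fun _ => 1, fun _ => x, fun _ => y, by simp, by simp⟩

theorem reprCosts_nonempty (z : FreeL X base) : (reprCosts base z).Nonempty := by
  induction z using Finsupp.induction_linear with
  | zero => exact ⟨0, zero_mem_reprCosts_zero⟩
  | add z w hz hw => exact (hz.add hw).mono (reprCosts_add_subset z w)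
  | single s a =>
    refine ⟨_, 1, fun _ => a, fun _ => s, fun _ => base, ?_, rfl⟩
    rw [Fin.sum_univ_one, show δ base base = 0 from dif_pos rfl, sub_zero,
      show δ base (s : X) = Finsupp.single s 1 from dif_neg s.2]
    exact Finsupp.smul_single_one s a

variable (base) in
noncomputable def reprSeminorm : Seminorm ℝ (FreeL X base) :=
  .ofSMulLE (fun z => sInf (reprCosts base z))
    (le_antisymm (csInf_le (bddBelow_reprCosts 0) zero_mem_reprCosts_zero)
      (le_csInf (reprCosts_nonempty 0) fun _ => nonneg_of_mem_reprCosts))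
    (fun z w => by
      rw [← csInf_add (reprCosts_nonempty z) (bddBelow_reprCosts z) (reprCosts_nonempty w)
        (bddBelow_reprCosts w)]
      exact csInf_le_csInf (bddBelow_reprCosts _) ((reprCosts_nonempty z).add
        (reprCosts_nonempty w)) (reprCosts_add_subset z w))
    (fun a z => by
      rw [Real.norm_eq_abs, ← smul_eq_mul, ← Real.sInf_smul_of_nonneg (abs_nonneg a)]
      exact csInf_le_csInf (bddBelow_reprCosts _) ((reprCosts_nonempty z).smul_set)
        (abs_smul_reprCosts_subset a z))

theorem reprSeminorm_le {z : FreeL X base} {r : ℝ} (hr : r ∈ reprCosts base z) :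
    reprSeminorm base z ≤ r :=
  csInf_le (bddBelow_reprCosts z) hr

theorem le_reprSeminorm {z : FreeL X base} {a : ℝ} (h : ∀ r ∈ reprCosts base z, a ≤ r) :
    a ≤ reprSeminorm base z :=
  le_csInf (reprCosts_nonempty z) h

theorem isGoodSeminorm_reprSeminorm : IsGoodSeminorm base (reprSeminorm base) := fun x y =>
  reprSeminorm_le (dist_mem_reprCosts x y)

theorem IsGoodSeminorm.le_of_mem_reprCosts {p : Seminorm ℝ (FreeL X base)}
    (hp : IsGoodSeminorm base p) {z : FreeL X base} {r : ℝ} (hr : r ∈ reprCosts base z) :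
    p z ≤ r := by
  obtain ⟨n, c, x, y, rfl, rfl⟩ := hr
  refine (le_sum_of_subadditive p (map_zero p).le (map_add_le_add p) _ _).trans
    (sum_le_sum fun i _ => ?_)
  rw [map_smul_eq_mul, Real.norm_eq_abs]
  exact mul_le_mul_of_nonneg_left (hp (x i) (y i)) (abs_nonneg _)

theorem IsGoodSeminorm.le_freeNorm {p : Seminorm ℝ (FreeL X base)} (hp : IsGoodSeminorm base p)
    (z : FreeL X base) : p z ≤ freeNorm base z := by
  obtain ⟨r, hr⟩ := reprCosts_nonempty z
  exact le_ciSup (f := fun q : {q // IsGoodSeminorm base q} => q.1 z)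
    ⟨r, by rintro _ ⟨q, rfl⟩; exact q.2.le_of_mem_reprCosts hr⟩ ⟨p, hp⟩

theorem le_freeNorm_of_addGroupSeminorm
    (q : AddGroupSeminorm (AddSubgroup.closure (Set.range (δ base))))
    (hq : ∀ (g : AddSubgroup.closure (Set.range (δ base))) (x y : X),
      (g : FreeL X base) = δ base x - δ base y → q g ≤ dist x y)
    (z : AddSubgroup.closure (Set.range (δ base))) : q z ≤ freeNorm base z := by
  refine le_trans (le_reprSeminorm ?_) (isGoodSeminorm_reprSeminorm.le_freeNorm _)
  rintro r ⟨n, c, x, y, hrep, rfl⟩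
  obtain ⟨m, hm, hcost⟩ := exists_int_repr_cost_le z.2 c x y hrep
  set g : Fin n → AddSubgroup.closure (Set.range (δ base)) := fun i =>
    ⟨δ base (x i) - δ base (y i), sub_mem (AddSubgroup.subset_closure ⟨x i, rfl⟩)
      (AddSubgroup.subset_closure ⟨y i, rfl⟩)⟩
  have hz : z = ∑ i, m i • g i := Subtype.ext (by simpa [g] using hm.symm)
  calc q z ≤ ∑ i, |(m i : ℝ)| * q (g i) := hz ▸ q.map_sum_zsmul_le _ m g
    _ ≤ ∑ i, |(m i : ℝ)| * dist (x i) (y i) :=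
      sum_le_sum fun i _ => mul_le_mul_of_nonneg_left (hq _ _ _ rfl) (abs_nonneg _)
    _ ≤ _ := hcost

end FreeL

theorem graev_universal_property_general
    {X : Type*} [MetricSpace X] (base : X)
    (A : AddSubgroup (FreeL X base))
    (hA : A = AddSubgroup.closure (Set.range (FreeL.δ base)))
    (G : Type*) [AddCommGroup G] [MetricSpace G]
    (hinv : ∀ a b c : G, dist (a + c) (b + c) = dist a b)
    (f : X → G) (hf : ∀ x y : X, dist (f x) (f y) ≤ dist x y)
    (F : A →+ G)
    (hF : ∀ x : X,
      F ⟨FreeL.δ base x, hA ▸ AddSubgroup.subset_closure ⟨x, rfl⟩⟩ = f x) :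
    ∀ a b : A,
      dist (F a) (F b) ≤
        FreeL.freeNorm base ((a : FreeL X base) - (b : FreeL X base)) := by
  subst hA
  intro a b
  let q := (AddGroupSeminorm.ofInvariantDist hinv).comp F
  have hq : ∀ (g : AddSubgroup.closure (Set.range (FreeL.δ base))) (x y : X),
      (g : FreeL X base) = FreeL.δ base x - FreeL.δ base y →
      q g ≤ dist x y := by
    intro g x y hg
    obtain rfl : g = ⟨_, AddSubgroup.subset_closure ⟨x, rfl⟩⟩ -
        ⟨_, AddSubgroup.subset_closure ⟨y, rfl⟩⟩ := Subtype.ext hg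
    change dist (F _) 0 ≤ _
    rw [map_sub, hF, hF, dist_sub_zero_of_invariant hinv]
    exact hf x y
  calc dist (F a) (F b) = q (a - b) := by
        change _ = dist (F _) 0
        rw [map_sub, dist_sub_zero_of_invariant hinv]
    _ ≤ _ := FreeL.le_freeNorm_of_addGroupSeminorm q hq (a - b)

/-- Universal property of the Graev metric: if `(G, ς)` is an abelian group
with a bi-invariant metric and `f : X → G` is `1`-Lipschitz with `f ∗ = 0`,
then any group homomorphism `A(X) → G` extending `f` is `1`-Lipschitz with
respect to the Graev metric `d̄(a,b) = ‖a - b‖` on `A(X)`. -/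
theorem graev_universal_property
    {X : Type*} [MetricSpace X] (base : X)
    (A : AddSubgroup (FreeL X base))
    (hA : A = AddSubgroup.closure (Set.range (FreeL.δ base)))
    (G : Type*) [AddCommGroup G] [MetricSpace G]
    (hinv : ∀ a b c : G, dist (a + c) (b + c) = dist a b)
    (f : X → G) (hf : ∀ x y : X, dist (f x) (f y) ≤ dist x y)
    (hf0 : f base = 0)
    (F : A →+ G)
    (hF : ∀ x : X,
      F ⟨FreeL.δ base x, hA ▸ AddSubgroup.subset_closure ⟨x, rfl⟩⟩ = f x) :
    ∀ a b : A,
      dist (F a) (F b) ≤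
        FreeL.freeNorm base ((a : FreeL X base) - (b : FreeL X base)) :=
  graev_universal_property_general base A hA G hinv f hf F hF
end
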